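/- For p = q = 2, the sequence a(n) = Sr(n,2,2) (the number of nonempty F ⊆ {1,...,n} with 2·min F ≥ |F| that are singletons or arithmetic progressions of difference 2) satisfies a(n+1) - a(n) = ⌊2(n+3)/5⌋ for all n ≥ 1, and its first values are 1, 2, 4, 6, 8, 11, 14, 18, 22, 26. -/

import Mathlib

/-!
A progression of difference `q ≥ 1` inside `{1, …, n}` is determined by its first term `a` and its
length `m`, and it is counted by `Sr n p q` iff `1 ≤ a`, `1 ≤ m`, `m ≤ p * a` and
`a + q * m ≤ n + q`. Going from `n` to `n + 1` adds exactly the pairs with `a + q * m = n + 1 + q`;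
for these, `m ≤ p * a` reads `(p * q + 1) * m ≤ p * (n + 1 + q)`, so there are
`⌊p (n + 1 + q) / (p q + 1)⌋` of them. For `p = q = 2` this is `⌊2 (n + 3) / 5⌋`, and summing these
increments gives the initial values.
-/

/-- F is a singleton or an arithmetic progression with common difference q. -/
def IsAP (q : ℕ) (F : Finset ℕ) : Prop :=
  F.card = 1 ∨ ∃ a m : ℕ, 2 ≤ m ∧ F = (Finset.range m).image (fun i => a + q * i)

/-- Number of nonempty F ⊆ {1,...,n} with p·min F ≥ |F| that are singletons or
arithmetic progressions of common difference q. -/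
noncomputable def Sr (n p q : ℕ) : ℕ :=
  Nat.card {F : Finset ℕ //
    F.Nonempty ∧ F ⊆ Finset.Icc 1 n ∧
    p * sInf (F : Set ℕ) ≥ F.card ∧ IsAP q F}

open Finset

def arithProg (a q m : ℕ) : Finset ℕ := (range m).image (fun i => a + q * i)

section ArithProg

variable {a q m x : ℕ}

lemma mem_arithProg : x ∈ arithProg a q m ↔ ∃ i < m, a + q * i = x := by
  simp [arithProg]

lemma card_arithProg (hq : 0 < q) : (arithProg a q m).card = m := by
  rw [arithProg, card_image_of_injective _ fun i j h => by simpa [hq.ne'] using h, card_range]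

lemma sInf_arithProg (hm : m ≠ 0) : sInf (arithProg a q m : Set ℕ) = a := by
  refine le_antisymm (Nat.sInf_le (mem_arithProg.2 ⟨0, by omega, by simp⟩)) ?_
  obtain ⟨i, -, hi⟩ := mem_arithProg.1 (Nat.sInf_mem (s := (arithProg a q m : Set ℕ))
    ⟨a, mem_arithProg.2 ⟨0, by omega, by simp⟩⟩)
  omega

lemma arithProg_one : arithProg a q 1 = {a} := by
  simp [arithProg]

lemma isAP_iff (hq : 0 < q) {F : Finset ℕ} :
    IsAP q F ↔ ∃ a m, m ≠ 0 ∧ F = arithProg a q m := by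
  constructor
  · rintro (h | ⟨a, m, hm, rfl⟩)
    · obtain ⟨a, rfl⟩ := card_eq_one.1 h
      exact ⟨a, 1, one_ne_zero, arithProg_one.symm⟩
    · exact ⟨a, m, by omega, rfl⟩
  · rintro ⟨a, m, hm, rfl⟩
    obtain rfl | hm := eq_or_ne m 1
    · exact .inl (card_arithProg hq)
    · exact .inr ⟨a, m, by omega, rfl⟩

lemma arithProg_subset_Icc_iff {n : ℕ} (hm : m ≠ 0) :
    arithProg a q m ⊆ Icc 1 n ↔ 1 ≤ a ∧ a + q * m ≤ n + q := by
  constructor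
  · intro h
    have h0 := mem_Icc.1 (h (mem_arithProg.2 ⟨0, by omega, rfl⟩))
    have h1 := mem_Icc.1 (h (mem_arithProg.2 ⟨m - 1, by omega, rfl⟩))
    refine ⟨by simpa using h0.1, ?_⟩
    have : q * m = q * (m - 1) + q := by rw [← Nat.mul_succ]; congr 1; omega
    omega
  · rintro ⟨ha, hn⟩ x hx
    obtain ⟨i, hi, rfl⟩ := mem_arithProg.1 hx
    have : q * (i + 1) ≤ q * m := Nat.mul_le_mul_left q hi
    rw [mem_Icc]; constructor <;> nlinarith

end ArithProg

/-- `(a, m)` encodes `arithProg a q m`; the last condition says that its last term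
`a + q * (m - 1)` is at most `n`, written without truncated subtraction. -/
def apParams (n p q : ℕ) : Finset (ℕ × ℕ) :=
  (Icc 1 n ×ˢ Icc 1 n).filter fun x => x.2 ≤ p * x.1 ∧ x.1 + q * x.2 ≤ n + q

section ApParams

variable {n p q : ℕ}

lemma mem_apParams (hq : 0 < q) {x : ℕ × ℕ} :
    x ∈ apParams n p q ↔ 1 ≤ x.1 ∧ 1 ≤ x.2 ∧ x.2 ≤ p * x.1 ∧ x.1 + q * x.2 ≤ n + q := by
  obtain ⟨a, m⟩ := x
  simp only [apParams, mem_filter, mem_product, mem_Icc]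
  constructor
  · tauto
  · rintro ⟨ha, hm, hmp, han⟩
    have : q * 1 ≤ q * m := Nat.mul_le_mul_left q hm
    refine ⟨⟨⟨ha, by nlinarith⟩, hm, by nlinarith⟩, hmp, han⟩

lemma Sr_eq_card_apParams (hq : 0 < q) : Sr n p q = (apParams n p q).card := by
  have hset : {F : Finset ℕ | F.Nonempty ∧ F ⊆ Icc 1 n ∧ p * sInf (F : Set ℕ) ≥ F.card ∧ IsAP q F}
      = ↑((apParams n p q).image fun x => arithProg x.1 q x.2) := by
    ext F
    simp only [Set.mem_ofPred_eq, coe_image, Set.mem_image, mem_coe, isAP_iff hq, Prod.exists,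
      mem_apParams hq]
    constructor
    · rintro ⟨-, hsub, hcard, a, m, hm, rfl⟩
      rw [arithProg_subset_Icc_iff hm] at hsub
      rw [sInf_arithProg hm, card_arithProg hq] at hcard
      exact ⟨a, m, ⟨hsub.1, by omega, hcard, hsub.2⟩, rfl⟩
    · rintro ⟨a, m, ⟨ha, hm, hmp, han⟩, rfl⟩
      refine ⟨⟨a, mem_arithProg.2 ⟨0, by omega, by simp⟩⟩,
        (arithProg_subset_Icc_iff (by omega)).2 ⟨ha, han⟩, ?_, a, m, by omega, rfl⟩
      rwa [sInf_arithProg (by omega), card_arithProg hq]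
  have hinj : Set.InjOn (fun x : ℕ × ℕ => arithProg x.1 q x.2) (apParams n p q) := by
    rintro ⟨a, m⟩ hx ⟨b, k⟩ - h
    have hm := ((mem_apParams hq).1 hx).2.1
    simp only at h
    have hmk : m = k := by simpa only [card_arithProg hq] using congrArg card h
    subst hmk
    have hab := congrArg (fun F : Finset ℕ => sInf (F : Set ℕ)) h
    simp only [sInf_arithProg (show m ≠ 0 by omega)] at hab
    rw [hab]
  rw [Sr, ← Set.coe_ofPred, Nat.card_coe_set_eq, hset, Set.ncard_coe_finset,
    card_image_of_injOn hinj]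

lemma card_apParams_succ (hq : 0 < q) :
    (apParams (n + 1) p q).card = (apParams n p q).card + p * (n + 1 + q) / (p * q + 1) := by
  have hlow : (apParams (n + 1) p q).filter (fun x => x.1 + q * x.2 ≤ n + q) = apParams n p q := by
    ext x
    simp only [mem_filter, mem_apParams hq]
    omega
  have htop : (apParams (n + 1) p q).filter (fun x => ¬ x.1 + q * x.2 ≤ n + q) =
      (Icc 1 (p * (n + 1 + q) / (p * q + 1))).image fun m => (n + 1 + q - q * m, m) := by
    ext ⟨a, m⟩
    simp only [mem_filter, mem_apParams hq, mem_image, mem_Icc, Prod.mk.injEq,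
      Nat.le_div_iff_mul_le (Nat.succ_pos _)]
    constructor
    · rintro ⟨⟨ha, hm, hmp, hold⟩, hnew⟩
      have : a + q * m = n + 1 + q := by omega
      refine ⟨m, ⟨hm, ?_⟩, by omega, rfl⟩
      nlinarith
    · rintro ⟨m, ⟨hm, hmp⟩, rfl, rfl⟩
      have hqm : q * m ≤ n + q := by
        by_contra h
        nlinarith
      refine ⟨⟨by omega, hm, ?_, by omega⟩, by omega⟩
      obtain ⟨a, ha⟩ : ∃ a, a + q * m = n + 1 + q := ⟨_, Nat.sub_add_cancel (by omega)⟩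
      rw [← ha, Nat.add_sub_cancel]
      nlinarith
  rw [← card_filter_add_card_filter_not (p := fun x => x.1 + q * x.2 ≤ n + q), hlow, htop,
    card_image_of_injective _ fun i j h => (Prod.mk.inj h).2, Nat.card_Icc, Nat.add_sub_cancel]

end ApParams

theorem Sr_eq_sum {n p q : ℕ} (hq : 0 < q) :
    Sr n p q = ∑ k ∈ range n, p * (k + 1 + q) / (p * q + 1) := by
  rw [Sr_eq_card_apParams hq]
  induction n with
  | zero => rfl
  | succ n ih => rw [card_apParams_succ hq, ih, sum_range_succ]

theorem stmt_18 :
    (∀ n : ℕ, 1 ≤ n → Sr (n + 1) 2 2 - Sr n 2 2 = 2 * (n + 3) / 5) ∧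
    Sr 1 2 2 = 1 ∧ Sr 2 2 2 = 2 ∧ Sr 3 2 2 = 4 ∧ Sr 4 2 2 = 6 ∧
    Sr 5 2 2 = 8 ∧ Sr 6 2 2 = 11 ∧ Sr 7 2 2 = 14 ∧ Sr 8 2 2 = 18 ∧
    Sr 9 2 2 = 22 ∧ Sr 10 2 2 = 26 := by
  simp only [Sr_eq_sum two_pos]
  exact ⟨fun n _ => by rw [sum_range_succ]; omega, by decide⟩
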